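/- Positivity preservation of the first-order conservative multidimensional scheme under the discrete divergence-free condition (Corollary 4.2, one cell, one step): Let d = 2, N ≥ 1, |K| > 0, edge lengths ℓ₁,…,ℓ_N > 0 and unit outward normals ξ⁽¹⁾,…,ξ⁽ᴺ⁾ ∈ ℝ² with Σⱼ ℓⱼ ξ⁽ʲ⁾ = 0. Let Ū_K ∈ 𝒢 with magnetic field B̄_K, and Ūⱼ ∈ 𝒢 with magnetic fields B̄ⱼ (j = 1,…,N). For each j let wave speeds satisfy σⱼʳ ≥ α_r(Ūⱼ, Ū_K; ξ⁽ʲ⁾) and σⱼˡ ≤ α_l(Ū_K, Ūⱼ; ξ⁽ʲ⁾), with σⱼ⁺ = max{σⱼʳ, 0}, σⱼ⁻ = min{σⱼˡ, 0}. Assume the discrete divergence-free condition |K|⁻¹ Σⱼ ℓⱼ ⟨ξ⁽ʲ⁾, (σⱼ⁺ B̄_K − σⱼ⁻ B̄ⱼ)/(σⱼ⁺ − σⱼ⁻)⟩ = 0 and the CFL condition (Δt/|K|) Σⱼ ℓⱼ(−σⱼ⁻) < 1 with Δt > 0. Then the conservative update Ū' = Ū_K − (Δt/|K|) Σⱼ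 ℓⱼ F̂(Ū_K, Ūⱼ; ξ⁽ʲ⁾) belongs to 𝒢. -/

import Mathlib

noncomputable section

open Finset

/-- An MHD state `U = (ρ, m, B, E)` viewed as a vector in `ℝ⁸`. -/
abbrev MHDState := Fin 8 → ℝ

namespace MHD

/-- Build a state from density, momentum, magnetic field, total energy. -/
def mk (ρ : ℝ) (m B : Fin 3 → ℝ) (E : ℝ) : MHDState :=
  ![ρ, m 0, m 1, m 2, B 0, B 1, B 2, E]

/-- Density component. -/
def dens (U : MHDState) : ℝ := U 0

/-- Momentum components. -/
def mom (U : MHDState) : Fin 3 → ℝ := ![U 1, U 2, U 3]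

/-- Magnetic field components. -/
def magB (U : MHDState) : Fin 3 → ℝ := ![U 4, U 5, U 6]

/-- Total energy component. -/
def toten (U : MHDState) : ℝ := U 7

/-- Euclidean dot product on `ℝ³`. -/
def dot3 (a b : Fin 3 → ℝ) : ℝ := ∑ k, a k * b k

/-- Squared Euclidean norm on `ℝ³`. -/
def sq3 (a : Fin 3 → ℝ) : ℝ := dot3 a a

/-- Euclidean norm on `ℝ³`. -/
def norm3 (a : Fin 3 → ℝ) : ℝ := Real.sqrt (sq3 a)

/-- Velocity `v = m / ρ`. -/
def vel (U : MHDState) : Fin 3 → ℝ := fun k => mom U k / dens U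

/-- Internal energy `𝓔(U) = E − (|m|²/ρ + |B|²)/2`. -/
def intE (U : MHDState) : ℝ := toten U - (sq3 (mom U) / dens U + sq3 (magB U)) / 2

/-- Specific internal energy `e = 𝓔(U)/ρ`. -/
def specE (U : MHDState) : ℝ := intE U / dens U

/-- The admissible state set `𝒢`. -/
def Gset : Set MHDState := {U | 0 < dens U ∧ 0 < intE U}

/-- The set `𝒢_ρ` of states with positive density. -/
def Grho : Set MHDState := {U | 0 < dens U}

/-- Euclidean dot product on `ℝ⁸`. -/
def dot8 (U V : MHDState) : ℝ := ∑ i, U i * V i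

/-- The vector `n* = (|v*|²/2, −v*, −B*, 1)`. -/
def nstar (vs Bs : Fin 3 → ℝ) : MHDState :=
  mk (sq3 vs / 2) (fun k => -vs k) (fun k => -Bs k) 1

/-- The set `𝒢*`. -/
def GstarSet : Set MHDState :=
  {U | 0 < dens U ∧ ∀ vs Bs : Fin 3 → ℝ, 0 < dot8 U (nstar vs Bs) + sq3 Bs / 2}

/-- Equation of state assumption: for `ρ > 0`, `e > 0 ↔ p(ρ,e) > 0`. -/
def IsEOS (pfun : ℝ → ℝ → ℝ) : Prop :=
  ∀ ρ e : ℝ, 0 < ρ → (0 < e ↔ 0 < pfun ρ e)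

/-- Pressure of a state, via the equation of state. -/
def pres (pfun : ℝ → ℝ → ℝ) (U : MHDState) : ℝ := pfun (dens U) (specE U)

/-- Total pressure `p + |B|²/2`. -/
def ptot (pfun : ℝ → ℝ → ℝ) (U : MHDState) : ℝ := pres pfun U + sq3 (magB U) / 2

/-- The `i`-th flux `F_i(U)`. -/
def flux (pfun : ℝ → ℝ → ℝ) (i : Fin 3) (U : MHDState) : MHDState :=
  mk (dens U * vel U i)
    (fun k => dens U * vel U i * vel U k - magB U i * magB U k
      + ptot pfun U * (if k = i then 1 else 0))
    (fun k => vel U i * magB U k - magB U i * vel U k)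
    (vel U i * (toten U + ptot pfun U) - magB U i * dot3 (vel U) (magB U))

/-- Directional inner product `⟨ξ, w⟩ = Σ_{k<d} ξ_k w_k` for `ξ ∈ ℝ^d`, `w ∈ ℝ³`, `d ≤ 3`. -/
def dirDot {d : ℕ} (hd : d ≤ 3) (ξ : Fin d → ℝ) (w : Fin 3 → ℝ) : ℝ :=
  ∑ k, ξ k * w (Fin.castLE hd k)

/-- Directional flux `⟨ξ, F(U)⟩ = Σ_{i<d} ξ_i F_i(U)`. -/
def dirFlux (pfun : ℝ → ℝ → ℝ) {d : ℕ} (hd : d ≤ 3) (ξ : Fin d → ℝ) (U : MHDState) :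
    MHDState :=
  ∑ i, ξ i • flux pfun (Fin.castLE hd i) U

/-- `ξ` is a unit vector. -/
def unitVec {d : ℕ} (ξ : Fin d → ℝ) : Prop := (∑ k, (ξ k) ^ 2) = 1

/-- `𝒞_s(U) = p / (ρ √(2e))`. -/
def soundC (pfun : ℝ → ℝ → ℝ) (U : MHDState) : ℝ :=
  pres pfun U / (dens U * Real.sqrt (2 * specE U))

/-- `𝒞(U; ξ)`. -/
def waveC (pfun : ℝ → ℝ → ℝ) {d : ℕ} (hd : d ≤ 3) (ξ : Fin d → ℝ) (U : MHDState) : ℝ :=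
  Real.sqrt ((soundC pfun U ^ 2 + sq3 (magB U) / dens U
    + Real.sqrt ((soundC pfun U ^ 2 + sq3 (magB U) / dens U) ^ 2
      - 4 * soundC pfun U ^ 2 * dirDot hd ξ (magB U) ^ 2 / dens U)) / 2)

/-- Roe-type averaged velocity `v̄ = (√ρ v + √ρ̃ ṽ)/(√ρ + √ρ̃)`. -/
def roeV (U Ut : MHDState) : Fin 3 → ℝ := fun k =>
  (Real.sqrt (dens U) * vel U k + Real.sqrt (dens Ut) * vel Ut k)
    / (Real.sqrt (dens U) + Real.sqrt (dens Ut))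

/-- `α_r(U, Ũ; ξ)`. -/
def alphaR (pfun : ℝ → ℝ → ℝ) {d : ℕ} (hd : d ≤ 3) (ξ : Fin d → ℝ) (U Ut : MHDState) : ℝ :=
  max (dirDot hd ξ (vel U)) (dirDot hd ξ (roeV U Ut)) + waveC pfun hd ξ U
    + norm3 (magB U - magB Ut) / (Real.sqrt (dens U) + Real.sqrt (dens Ut))

/-- `α_l(U, Ũ; ξ)`. -/
def alphaL (pfun : ℝ → ℝ → ℝ) {d : ℕ} (hd : d ≤ 3) (ξ : Fin d → ℝ) (U Ut : MHDState) : ℝ :=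
  min (dirDot hd ξ (vel U)) (dirDot hd ξ (roeV U Ut)) - waveC pfun hd ξ U
    - norm3 (magB U - magB Ut) / (Real.sqrt (dens U) + Real.sqrt (dens Ut))

/-- `α_⋆(U, Ũ; ξ)`. -/
def alphaS (pfun : ℝ → ℝ → ℝ) {d : ℕ} (hd : d ≤ 3) (ξ : Fin d → ℝ) (U Ut : MHDState) : ℝ :=
  max (|dirDot hd ξ (vel U)|) (|dirDot hd ξ (roeV U Ut)|) + waveC pfun hd ξ U
    + norm3 (magB U - magB Ut) / (Real.sqrt (dens U) + Real.sqrt (dens Ut))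

/-- The vector `θ(U, v*, B*) = 2^{−1/2}(B − B*, √ρ(v − v*), √(2ρe)) ∈ ℝ⁷`. -/
def theta (U : MHDState) (vs Bs : Fin 3 → ℝ) : Fin 7 → ℝ :=
  ![(magB U 0 - Bs 0) / Real.sqrt 2,
    (magB U 1 - Bs 1) / Real.sqrt 2,
    (magB U 2 - Bs 2) / Real.sqrt 2,
    Real.sqrt (dens U) * (vel U 0 - vs 0) / Real.sqrt 2,
    Real.sqrt (dens U) * (vel U 1 - vs 1) / Real.sqrt 2,
    Real.sqrt (dens U) * (vel U 2 - vs 2) / Real.sqrt 2,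
    Real.sqrt (2 * intE U) / Real.sqrt 2]

/-- `|θ|²`. -/
def thetaSq (U : MHDState) (vs Bs : Fin 3 → ℝ) : ℝ := ∑ k, theta U vs Bs k ^ 2

/-- Godunov–Powell source vector `S(U) = (0, B, v, v·B)`. -/
def source (U : MHDState) : MHDState := mk 0 (magB U) (vel U) (dot3 (vel U) (magB U))

/-- HLL numerical flux with clamped wave speeds `σm ≤ 0 ≤ σp`. -/
def hllFlux (pfun : ℝ → ℝ → ℝ) {d : ℕ} (hd : d ≤ 3) (ξ : Fin d → ℝ)
    (Um Up : MHDState) (σm σp : ℝ) : MHDState :=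
  (σp - σm)⁻¹ • (σp • dirFlux pfun hd ξ Um - σm • dirFlux pfun hd ξ Up
    + (σm * σp) • (Up - Um))

/-- HLL intermediate state `H(U⁻, U⁺; ξ)`. -/
def hllMid (pfun : ℝ → ℝ → ℝ) {d : ℕ} (hd : d ≤ 3) (ξ : Fin d → ℝ)
    (Um Up : MHDState) (σm σp : ℝ) : MHDState :=
  (σp - σm)⁻¹ • (σp • Up - dirFlux pfun hd ξ Up - σm • Um + dirFlux pfun hd ξ Um)

/-- The quantity `α̂_j` of Theorem 2.3. -/
def alphaHat (pfun : ℝ → ℝ → ℝ) {d : ℕ} (hd : d ≤ 3) {N : ℕ}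
    (s : Fin N → ℝ) (ξ : Fin N → Fin d → ℝ) (U : Fin N → MHDState) (j : Fin N) : ℝ :=
  max (dirDot hd (ξ j) (vel (U j)))
      ((∑ i, s i)⁻¹ * ∑ i, s i * dirDot hd (fun k => ξ j k - ξ i k) (roeV (U j) (U i)))
  + waveC pfun hd (ξ j) (U j)
  + 2 * (∑ i, s i)⁻¹ * ∑ i, s i *
      (norm3 (magB (U j) - magB (U i)) / (Real.sqrt (dens (U j)) + Real.sqrt (dens (U i))))

def d1le3 : (1 : ℕ) ≤ 3 := by omega
def d2le3 : (2 : ℕ) ≤ 3 := by omega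

/-- In one dimension the direction `ξ = 1`. -/
def xi1 : Fin 1 → ℝ := fun _ => 1

/-!
Since `∑ ℓⱼ ξ⁽ʲ⁾ = 0` cancels the physical fluxes of `U_K`, the update is
`U_K + ∑ λⱼ (Hⱼ − U_K)` with `λⱼ = (Δt/|K|) ℓⱼ (−σⱼ⁻) ≥ 0` and `Hⱼ` the HLL intermediate states;
the CFL condition says `∑ λⱼ < 1`. Admissibility is tested with the geometric quasi-linearization
`U ↦ U·n*(v*, B*) + |B*|²/2`, which is positive on `𝒢` for all `v*, B*` and equals `𝓔(U)` at
`v* = v, B* = B`. Instead of `Hⱼ ∈ 𝒢`, the wave speed bounds give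
`(σⱼ⁺ − σⱼ⁻)(Hⱼ·n* + |B*|²/2) ≥ (v*·B*)(⟨ξ⁽ʲ⁾, B_K⟩ − ⟨ξ⁽ʲ⁾, Bⱼ⟩)`: the remainder terms are
controlled by the fast magnetosonic speed `𝒞`, and the difference of the magnetic energies of
`U_K` and `Uⱼ` by the Roe-averaged velocity together with `|B − B̃|/(√ρ + √ρ̃)`. The discrete
divergence-free condition makes the weighted sum of these right-hand sides vanish, and the density
is handled in the same way, with `ρ(Hⱼ) ≥ 0`.
-/

lemma dot8_eq_dotProduct (U V : MHDState) : dot8 U V = U ⬝ᵥ V := rfl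

lemma dot3_expand (a b : Fin 3 → ℝ) : dot3 a b = a 0 * b 0 + a 1 * b 1 + a 2 * b 2 := by
  simp [dot3, Fin.sum_univ_three]

lemma sq3_expand (a : Fin 3 → ℝ) : sq3 a = a 0 ^ 2 + a 1 ^ 2 + a 2 ^ 2 := by
  rw [sq3, dot3_expand]; ring

lemma dot8_expand (U V : MHDState) : dot8 U V = U 0 * V 0 + U 1 * V 1 + U 2 * V 2 + U 3 * V 3
    + U 4 * V 4 + U 5 * V 5 + U 6 * V 6 + U 7 * V 7 := by
  simp [dot8, Fin.sum_univ_eight]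

lemma sq3_nonneg (a : Fin 3 → ℝ) : 0 ≤ sq3 a := by
  rw [sq3_expand]; positivity

lemma norm3_nonneg (a : Fin 3 → ℝ) : 0 ≤ norm3 a := Real.sqrt_nonneg _

lemma norm3_sq (a : Fin 3 → ℝ) : norm3 a ^ 2 = sq3 a := Real.sq_sqrt (sq3_nonneg a)

lemma sq3_sub_comm (a b : Fin 3 → ℝ) : sq3 (a - b) = sq3 (b - a) := by
  simp only [sq3_expand, Pi.sub_apply]; ring

lemma norm3_sub_comm (a b : Fin 3 → ℝ) : norm3 (a - b) = norm3 (b - a) := by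
  rw [norm3, norm3, sq3_sub_comm]

lemma dot3_sq_le (a b : Fin 3 → ℝ) : dot3 a b ^ 2 ≤ sq3 a * sq3 b := by
  simp only [dot3_expand, sq3_expand]
  nlinarith [sq_nonneg (a 0 * b 1 - a 1 * b 0), sq_nonneg (a 0 * b 2 - a 2 * b 0),
    sq_nonneg (a 1 * b 2 - a 2 * b 1)]

lemma abs_dot3_le (a b : Fin 3 → ℝ) : |dot3 a b| ≤ norm3 a * norm3 b := by
  rw [norm3, norm3, ← Real.sqrt_mul (sq3_nonneg a)]
  exact Real.abs_le_sqrt (dot3_sq_le a b)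

lemma abs_sq3_sub_sq3_le (a b : Fin 3 → ℝ) :
    |sq3 a - sq3 b| ≤ norm3 (a - b) * (norm3 a + norm3 b) := by
  have h : sq3 a - sq3 b = dot3 (a - b) a + dot3 (a - b) b := by
    simp only [sq3_expand, dot3_expand, Pi.sub_apply]; ring
  rw [h, mul_add]
  exact (abs_add_le _ _).trans (add_le_add (abs_dot3_le _ _) (abs_dot3_le _ _))

section UnitVector

variable {n : Fin 3 → ℝ}

lemma sq_dot3_le_sq3 (hn : sq3 n = 1) (a : Fin 3 → ℝ) : dot3 n a ^ 2 ≤ sq3 a := by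
  simpa [hn] using dot3_sq_le n a

lemma dot3_sub_mul_sq_le (hn : sq3 n = 1) (a b : Fin 3 → ℝ) :
    (dot3 a b - dot3 n a * dot3 n b) ^ 2 ≤ (sq3 a - dot3 n a ^ 2) * (sq3 b - dot3 n b ^ 2) := by
  have hperp : ∀ x y : Fin 3 → ℝ,
      dot3 (x - dot3 n x • n) (y - dot3 n y • n) = dot3 x y - dot3 n x * dot3 n y := by
    intro x y
    rw [sq3, dot3_expand] at hn
    simp only [dot3_expand, Pi.sub_apply, Pi.smul_apply, smul_eq_mul]
    linear_combination
      (n 0 * x 0 + n 1 * x 1 + n 2 * x 2) * (n 0 * y 0 + n 1 * y 1 + n 2 * y 2) * hn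
  have h := dot3_sq_le (a - dot3 n a • n) (b - dot3 n b • n)
  rwa [sq3, sq3, hperp, hperp, hperp, ← sq3, ← sq3, ← sq, ← sq] at h

def perpNorm (n a : Fin 3 → ℝ) : ℝ := √(sq3 a - dot3 n a ^ 2)

lemma perpNorm_sq (hn : sq3 n = 1) (a : Fin 3 → ℝ) : perpNorm n a ^ 2 = sq3 a - dot3 n a ^ 2 :=
  Real.sq_sqrt (sub_nonneg.2 (sq_dot3_le_sq3 hn a))

lemma abs_dot3_sub_mul_le (hn : sq3 n = 1) (a b : Fin 3 → ℝ) :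
    |dot3 a b - dot3 n a * dot3 n b| ≤ perpNorm n a * perpNorm n b := by
  rw [perpNorm, perpNorm, ← Real.sqrt_mul (sub_nonneg.2 (sq_dot3_le_sq3 hn a))]
  exact Real.abs_le_sqrt (dot3_sub_mul_sq_le hn a b)

end UnitVector

section Direction

variable {d : ℕ} (hd : d ≤ 3) {ξ : Fin d → ℝ}

def embed3 (ξ : Fin d → ℝ) : Fin 3 → ℝ :=
  fun j => ∑ k, if Fin.castLE hd k = j then ξ k else 0

lemma dirDot_eq_dot3 (ξ : Fin d → ℝ) (w : Fin 3 → ℝ) : dirDot hd ξ w = dot3 (embed3 hd ξ) w := by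
  simp only [dirDot, dot3, embed3, Finset.sum_mul, ite_mul, zero_mul]
  rw [Finset.sum_comm]
  simp

lemma sq3_embed3 (hξ : unitVec ξ) : sq3 (embed3 hd ξ) = 1 := by
  have h : ∀ k, embed3 hd ξ (Fin.castLE hd k) = ξ k := fun k => by
    simp [embed3, Fin.castLE_inj]
  rw [sq3, ← dirDot_eq_dot3, ← hξ]
  simp [dirDot, h, sq]

lemma sq_dirDot_le (hξ : unitVec ξ) (w : Fin 3 → ℝ) : dirDot hd ξ w ^ 2 ≤ sq3 w := by
  rw [dirDot_eq_dot3]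
  exact sq_dot3_le_sq3 (sq3_embed3 hd hξ) w

lemma abs_dirDot_le (hξ : unitVec ξ) (w : Fin 3 → ℝ) : |dirDot hd ξ w| ≤ norm3 w :=
  Real.abs_le_sqrt (sq_dirDot_le hd hξ w)

lemma dirDot_sub (ξ : Fin d → ℝ) (a b : Fin 3 → ℝ) :
    dirDot hd ξ (a - b) = dirDot hd ξ a - dirDot hd ξ b := by
  simp [dirDot, mul_sub]

end Direction

-- The hypotheses say that `C²` is at least the larger root of `X² − (a₁² + a₂² + a₃²) X + a₂² a₃²`.
lemma mul_add_mul_add_mul_le {a₁ a₂ a₃ C : ℝ} (hC : 0 < C)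
    (hroot : (a₁ ^ 2 + a₂ ^ 2 + a₃ ^ 2) * C ^ 2 ≤ C ^ 4 + a₂ ^ 2 * a₃ ^ 2)
    (htr : a₁ ^ 2 + a₂ ^ 2 + a₃ ^ 2 ≤ 2 * C ^ 2) (t τ β η : ℝ) :
    a₁ * t * β + a₂ * t * η + a₃ * τ * β ≤ C * (t ^ 2 + τ ^ 2 + β ^ 2 + η ^ 2) / 2 := by
  set P₁ := C ^ 2 - a₁ ^ 2 - a₂ ^ 2
  set P₂ := C ^ 2 - a₃ ^ 2
  have hdet : (a₁ * a₃) ^ 2 ≤ P₁ * P₂ := by linarith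
  have hP₁ : 0 ≤ P₁ := by nlinarith
  have hP₂ : 0 ≤ P₂ := by nlinarith
  have hform : 0 ≤ P₁ * t ^ 2 - 2 * (a₁ * a₃) * t * τ + P₂ * τ ^ 2 := by
    rcases hP₁.eq_or_lt with h | h
    · have : a₁ * a₃ = 0 := by nlinarith
      rw [← h, this]
      nlinarith [mul_nonneg hP₂ (sq_nonneg τ)]
    · nlinarith [sq_nonneg (P₁ * t - a₁ * a₃ * τ), mul_nonneg (sub_nonneg.2 hdet) (sq_nonneg τ)]
  nlinarith [sq_nonneg (C * β - (a₁ * t + a₃ * τ)), sq_nonneg (C * η - a₂ * t)]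

lemma larger_root_eq {S k : ℝ} (hk : 4 * k ≤ S ^ 2) :
    S * ((S + √(S ^ 2 - 4 * k)) / 2) = ((S + √(S ^ 2 - 4 * k)) / 2) ^ 2 + k := by
  linear_combination (-1 / 4 : ℝ) * Real.sq_sqrt (sub_nonneg.2 hk)

lemma add_mul_add_le (x₁ x₂ y₁ y₂ : ℝ) :
    (x₁ + x₂) * (y₁ + y₂) ≤ x₁ ^ 2 + x₂ ^ 2 + y₁ ^ 2 + y₂ ^ 2 := by
  nlinarith [sq_nonneg (x₁ - y₁), sq_nonneg (x₁ - y₂), sq_nonneg (x₂ - y₁), sq_nonneg (x₂ - y₂)]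

lemma add_sum_mul_sub_pos {N : ℕ} {t y b : Fin N → ℝ} {x : ℝ} (ht : ∀ j, 0 ≤ t j)
    (ht1 : ∑ j, t j < 1) (hx : 0 < x) (hby : ∀ j, b j ≤ y j) (hb : ∑ j, t j * b j = 0) :
    0 < x + ∑ j, t j * (y j - x) := by
  have hsplit : x + ∑ j, t j * (y j - x) = (1 - ∑ j, t j) * x + ∑ j, t j * y j := by
    simp only [mul_sub, Finset.sum_sub_distrib, ← Finset.sum_mul]; ring
  have hle : ∑ j, t j * b j ≤ ∑ j, t j * y j :=
    Finset.sum_le_sum fun j _ => mul_le_mul_of_nonneg_left (hby j) (ht j)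
  rw [hsplit]
  nlinarith [mul_pos (sub_pos.2 ht1) hx]

section WaveSpeed

variable {pfun : ℝ → ℝ → ℝ} {d : ℕ} {hd : d ≤ 3} {ξ : Fin d → ℝ} {U : MHDState}

lemma specE_pos (hU : U ∈ Gset) : 0 < specE U := div_pos hU.2 hU.1

lemma pres_pos (hEOS : IsEOS pfun) (hU : U ∈ Gset) : 0 < pres pfun U :=
  (hEOS _ _ hU.1).mp (specE_pos hU)

lemma soundC_pos (hEOS : IsEOS pfun) (hU : U ∈ Gset) : 0 < soundC pfun U := by
  have := specE_pos hU
  have := pres_pos hEOS hU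
  have := hU.1
  unfold soundC
  positivity

lemma soundC_mul_sqrt (hU : U ∈ Gset) :
    soundC pfun U * (√(dens U) * √(2 * intE U)) = pres pfun U := by
  have hρ := hU.1
  have := specE_pos hU
  have h : √(dens U) * √(2 * intE U) = dens U * √(2 * specE U) := by
    rw [show 2 * intE U = dens U * (2 * specE U) by rw [specE]; field_simp,
      Real.sqrt_mul hρ.le, ← mul_assoc, Real.mul_self_sqrt hρ.le]
  rw [soundC, h, div_mul_cancel₀]
  positivity

lemma waveC_nonneg (U : MHDState) : 0 ≤ waveC pfun hd ξ U := Real.sqrt_nonneg _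

lemma waveC_sq (hρ : 0 < dens U) :
    waveC pfun hd ξ U ^ 2 = (soundC pfun U ^ 2 + sq3 (magB U) / dens U
      + √((soundC pfun U ^ 2 + sq3 (magB U) / dens U) ^ 2
        - 4 * soundC pfun U ^ 2 * dirDot hd ξ (magB U) ^ 2 / dens U)) / 2 := by
  have := sq3_nonneg (magB U)
  exact Real.sq_sqrt (by positivity)

lemma waveC_pos (hEOS : IsEOS pfun) (hU : U ∈ Gset) : 0 < waveC pfun hd ξ U := by
  have hcs := pow_pos (soundC_pos hEOS hU) 2
  have hB : 0 ≤ sq3 (magB U) / dens U := div_nonneg (sq3_nonneg _) hU.1.le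
  have hr := Real.sqrt_nonneg ((soundC pfun U ^ 2 + sq3 (magB U) / dens U) ^ 2
        - 4 * soundC pfun U ^ 2 * dirDot hd ξ (magB U) ^ 2 / dens U)
  exact Real.sqrt_pos.2 (by linarith)

lemma waveC_spec (hξ : unitVec ξ) (hρ : 0 < dens U) :
    (soundC pfun U ^ 2 + sq3 (magB U) / dens U) * waveC pfun hd ξ U ^ 2
        = waveC pfun hd ξ U ^ 4 + soundC pfun U ^ 2 * (dirDot hd ξ (magB U) ^ 2 / dens U) ∧
      soundC pfun U ^ 2 + sq3 (magB U) / dens U ≤ 2 * waveC pfun hd ξ U ^ 2 := by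
  set S := soundC pfun U ^ 2 + sq3 (magB U) / dens U
  set k := soundC pfun U ^ 2 * (dirDot hd ξ (magB U) ^ 2 / dens U)
  have hBn : dirDot hd ξ (magB U) ^ 2 / dens U ≤ sq3 (magB U) / dens U :=
    div_le_div_of_nonneg_right (sq_dirDot_le hd hξ _) hρ.le
  have hBn0 : 0 ≤ dirDot hd ξ (magB U) ^ 2 / dens U := by positivity
  have hk : 4 * k ≤ S ^ 2 := by
    nlinarith [sq_nonneg (soundC pfun U ^ 2 - dirDot hd ξ (magB U) ^ 2 / dens U),
      sq_nonneg (soundC pfun U)]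
  have hC : waveC pfun hd ξ U ^ 2 = (S + √(S ^ 2 - 4 * k)) / 2 := by
    rw [waveC_sq hρ]
    congr 4
    ring
  refine ⟨?_, ?_⟩
  · rw [show waveC pfun hd ξ U ^ 4 = (waveC pfun hd ξ U ^ 2) ^ 2 by ring, hC]
    exact larger_root_eq hk
  · rw [hC]
    linarith [Real.sqrt_nonneg (S ^ 2 - 4 * k)]

end WaveSpeed

lemma abs_remainder_le_perpNorm {n : Fin 3 → ℝ} (hn : sq3 n = 1) (B u b : Fin 3 → ℝ) {p : ℝ}
    (hp : 0 ≤ p) :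
    |dot3 n B * dot3 u b - dot3 n u * dot3 B b - p * dot3 n u|
      ≤ |dot3 n B| * (perpNorm n u * perpNorm n b) + |dot3 n u| * (perpNorm n B * perpNorm n b)
        + p * |dot3 n u| :=
  calc |dot3 n B * dot3 u b - dot3 n u * dot3 B b - p * dot3 n u|
      = |dot3 n B * (dot3 u b - dot3 n u * dot3 n b)
          - dot3 n u * (dot3 B b - dot3 n B * dot3 n b) - p * dot3 n u| := by ring_nf
    _ ≤ |dot3 n B| * |dot3 u b - dot3 n u * dot3 n b|
          + |dot3 n u| * |dot3 B b - dot3 n B * dot3 n b| + p * |dot3 n u| := by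
        rw [← abs_mul, ← abs_mul, ← abs_of_nonneg hp, ← abs_mul, abs_of_nonneg hp]
        exact (abs_sub _ _).trans (add_le_add_left (abs_sub _ _) _)
    _ ≤ _ := by gcongr <;> exact abs_dot3_sub_mul_le hn _ _

theorem abs_remainder_le {pfun : ℝ → ℝ → ℝ} {d : ℕ} {hd : d ≤ 3} {ξ : Fin d → ℝ} {U : MHDState}
    (hEOS : IsEOS pfun) (hξ : unitVec ξ) (hU : U ∈ Gset) (u b : Fin 3 → ℝ) :
    |dirDot hd ξ (magB U) * dot3 u b - dirDot hd ξ u * dot3 (magB U) b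
        - pres pfun U * dirDot hd ξ u|
      ≤ waveC pfun hd ξ U * (dens U * sq3 u / 2 + sq3 b / 2 + intE U) := by
  obtain ⟨hroot, htr⟩ := waveC_spec (pfun := pfun) (hd := hd) hξ hU.1
  have hC := waveC_pos (hd := hd) (ξ := ξ) hEOS hU
  have hn := sq3_embed3 hd hξ
  simp only [dirDot_eq_dot3] at hroot htr ⊢
  set n := embed3 hd ξ
  set B := magB U
  set ρ := dens U
  have hsρ : 0 < √ρ := Real.sqrt_pos.2 hU.1
  have hsρ2 : √ρ ^ 2 = ρ := Real.sq_sqrt hU.1.le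
  have hη : √(2 * intE U) ^ 2 = 2 * intE U := Real.sq_sqrt (by linarith [hU.2])
  have hcoef : (perpNorm n B / √ρ) ^ 2 + soundC pfun U ^ 2 + (|dot3 n B| / √ρ) ^ 2
      = soundC pfun U ^ 2 + sq3 B / ρ := by
    rw [div_pow, div_pow, perpNorm_sq hn, sq_abs, hsρ2]; field_simp; ring
  -- With `a₁ = |B⊥|/√ρ`, `a₂ = 𝒞_s`, `a₃ = |⟨ξ, B⟩|/√ρ`, the root condition defines `𝒞`.
  have hquad := mul_add_mul_add_mul_le hC
    (by rw [hcoef, div_pow, sq_abs, hsρ2]; linarith) (by rw [hcoef]; exact htr)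
    (√ρ * |dot3 n u|) (√ρ * perpNorm n u) (perpNorm n b) (√(2 * intE U))
  have hp : soundC pfun U * (√ρ * |dot3 n u|) * √(2 * intE U) = pres pfun U * |dot3 n u| := by
    rw [← soundC_mul_sqrt hU]; ring
  have hsum : (√ρ * |dot3 n u|) ^ 2 + (√ρ * perpNorm n u) ^ 2 + perpNorm n b ^ 2
      + √(2 * intE U) ^ 2 ≤ 2 * (ρ * sq3 u / 2 + sq3 b / 2 + intE U) := by
    rw [mul_pow, mul_pow, sq_abs, hsρ2, perpNorm_sq hn, perpNorm_sq hn, hη]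
    nlinarith [sq_nonneg (dot3 n b)]
  calc _ ≤ |dot3 n B| * (perpNorm n u * perpNorm n b) + |dot3 n u| * (perpNorm n B * perpNorm n b)
        + pres pfun U * |dot3 n u| := abs_remainder_le_perpNorm hn B u b (pres_pos hEOS hU).le
    _ = perpNorm n B / √ρ * (√ρ * |dot3 n u|) * perpNorm n b
          + soundC pfun U * (√ρ * |dot3 n u|) * √(2 * intE U)
          + |dot3 n B| / √ρ * (√ρ * perpNorm n u) * perpNorm n b := by
        rw [hp]; field_simp; ring
    _ ≤ _ := hquad
    _ ≤ waveC pfun hd ξ U * (ρ * sq3 u / 2 + sq3 b / 2 + intE U) := by nlinarith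

def gql (vs Bs : Fin 3 → ℝ) (U : MHDState) : ℝ := dot8 U (nstar vs Bs) + sq3 Bs / 2

section Identities

variable {pfun : ℝ → ℝ → ℝ} {d : ℕ} (hd : d ≤ 3) (ξ : Fin d → ℝ) {U : MHDState}

theorem gql_eq (hρ : dens U ≠ 0) (vs Bs : Fin 3 → ℝ) :
    gql vs Bs U = dens U * sq3 (vel U - vs) / 2 + sq3 (magB U - Bs) / 2 + intE U := by
  have h : U 0 ≠ 0 := hρ
  simp only [gql, dot8_expand, sq3, dot3_expand, nstar, mk, intE, vel, mom, magB, dens, toten,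
    Pi.sub_apply, Matrix.cons_val_zero, Matrix.cons_val_one, Matrix.cons_val]
  field_simp
  ring

lemma gql_vel_magB (hρ : dens U ≠ 0) : gql (vel U) (magB U) U = intE U := by
  simp [gql_eq hρ, sq3_expand]

lemma gql_pos (hU : U ∈ Gset) (vs Bs : Fin 3 → ℝ) : 0 < gql vs Bs U := by
  rw [gql_eq hU.1.ne']
  have := mul_nonneg hU.1.le (sq3_nonneg (vel U - vs))
  linarith [sq3_nonneg (magB U - Bs), hU.2]

lemma dot8_flux_nstar (i : Fin 3) (hρ : dens U ≠ 0) (vs Bs : Fin 3 → ℝ) :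
    dot8 (flux pfun i U) (nstar vs Bs) =
      vel U i * gql vs Bs U
      - (magB U i * dot3 (vel U - vs) (magB U - Bs) - (vel U - vs) i * dot3 (magB U) (magB U - Bs)
          - pres pfun U * (vel U - vs) i)
      - vs i * sq3 Bs / 2 + magB U i * dot3 vs Bs - (vel U - vs) i * sq3 (magB U - Bs) / 2 := by
  have h : U 0 ≠ 0 := hρ
  fin_cases i <;>
  · simp only [gql, dot8_expand, flux, ptot, sq3, dot3_expand, nstar, mk, vel, mom, magB, dens,
      toten, Pi.sub_apply, Fin.isValue, Fin.zero_eta, Fin.mk_one, Fin.reduceFinMk, Fin.reduceEq,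
      Matrix.cons_val_zero, Matrix.cons_val_one, Matrix.cons_val, ↓reduceIte, mul_one, mul_zero,
      add_zero]
    field_simp
    ring

theorem dot8_dirFlux_nstar (hρ : dens U ≠ 0) (vs Bs : Fin 3 → ℝ) :
    dot8 (dirFlux pfun hd ξ U) (nstar vs Bs) =
      dirDot hd ξ (vel U) * gql vs Bs U
      - (dirDot hd ξ (magB U) * dot3 (vel U - vs) (magB U - Bs)
          - dirDot hd ξ (vel U - vs) * dot3 (magB U) (magB U - Bs)
          - pres pfun U * dirDot hd ξ (vel U - vs))
      - dirDot hd ξ vs * sq3 Bs / 2 + dirDot hd ξ (magB U) * dot3 vs Bs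
      - dirDot hd ξ (vel U - vs) * sq3 (magB U - Bs) / 2 := by
  rw [dot8_eq_dotProduct, dirFlux, sum_dotProduct]
  simp only [smul_dotProduct, ← dot8_eq_dotProduct, dot8_flux_nstar _ hρ, dirDot,
    Finset.sum_mul, Finset.mul_sum, Finset.sum_div, smul_eq_mul]
  simp only [← Finset.sum_sub_distrib (G := ℝ), ← Finset.sum_add_distrib (M := ℝ)]
  refine Finset.sum_congr rfl fun i _ => ?_
  ring

lemma dens_dirFlux : dens (dirFlux pfun hd ξ U) = dens U * dirDot hd ξ (vel U) := by
  simp only [dens, dirFlux, dirDot, Finset.sum_apply, Finset.mul_sum, Pi.smul_apply, smul_eq_mul]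
  refine Finset.sum_congr rfl fun i _ => ?_
  simp only [flux, mk, Matrix.cons_val_zero, dens]
  ring

end Identities

def magJump (U V : MHDState) : ℝ := norm3 (magB U - magB V) / (√(dens U) + √(dens V))

lemma magJump_nonneg (U V : MHDState) : 0 ≤ magJump U V :=
  div_nonneg (norm3_nonneg _) (by positivity)

lemma roeV_comm (U V : MHDState) : roeV U V = roeV V U := by
  funext k
  simp only [roeV, add_comm]

section HLL

variable {pfun : ℝ → ℝ → ℝ} {d : ℕ} {hd : d ≤ 3} {ξ : Fin d → ℝ} {Um Up : MHDState} {σm σp : ℝ}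

lemma alphaR_eq (Up Um : MHDState) :
    alphaR pfun hd ξ Up Um = max (dirDot hd ξ (vel Up)) (dirDot hd ξ (roeV Up Um))
      + waveC pfun hd ξ Up + magJump Up Um := rfl

lemma alphaL_eq (Um Up : MHDState) :
    alphaL pfun hd ξ Um Up = min (dirDot hd ξ (vel Um)) (dirDot hd ξ (roeV Up Um))
      - waveC pfun hd ξ Um - magJump Up Um := by
  rw [alphaL, magJump, roeV_comm, norm3_sub_comm, add_comm (√(dens Um))]

lemma alphaL_lt_alphaR (hEOS : IsEOS pfun) (hm : Um ∈ Gset) (hp : Up ∈ Gset) :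
    alphaL pfun hd ξ Um Up < alphaR pfun hd ξ Up Um := by
  rw [alphaL_eq, alphaR_eq]
  linarith [min_le_right (dirDot hd ξ (vel Um)) (dirDot hd ξ (roeV Up Um)),
    le_max_right (dirDot hd ξ (vel Up)) (dirDot hd ξ (roeV Up Um)),
    waveC_pos (hd := hd) (ξ := ξ) hEOS hm, waveC_pos (hd := hd) (ξ := ξ) hEOS hp,
    magJump_nonneg Up Um]

lemma le_sub_of_alphaR_le (h : alphaR pfun hd ξ Up Um ≤ σp) :
    dirDot hd ξ (vel Up) ≤ σp - waveC pfun hd ξ Up - magJump Up Um ∧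
      dirDot hd ξ (roeV Up Um) ≤ σp - waveC pfun hd ξ Up - magJump Up Um :=
  max_le_iff.mp (by rw [alphaR_eq] at h; linarith)

lemma add_le_of_le_alphaL (h : σm ≤ alphaL pfun hd ξ Um Up) :
    σm + waveC pfun hd ξ Um + magJump Up Um ≤ dirDot hd ξ (vel Um) ∧
      σm + waveC pfun hd ξ Um + magJump Up Um ≤ dirDot hd ξ (roeV Up Um) :=
  le_min_iff.mp (by rw [alphaL_eq] at h; linarith)

lemma sub_smul_hllMid (h : σp - σm ≠ 0) :
    (σp - σm) • hllMid pfun hd ξ Um Up σm σp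
      = σp • Up - dirFlux pfun hd ξ Up - σm • Um + dirFlux pfun hd ξ Um := by
  rw [hllMid, smul_smul, mul_inv_cancel₀ h, one_smul]

lemma sub_mul_gql_hllMid (h : σp - σm ≠ 0) (vs Bs : Fin 3 → ℝ) :
    (σp - σm) * gql vs Bs (hllMid pfun hd ξ Um Up σm σp)
      = σp * gql vs Bs Up - σm * gql vs Bs Um
        - dot8 (dirFlux pfun hd ξ Up) (nstar vs Bs)
        + dot8 (dirFlux pfun hd ξ Um) (nstar vs Bs) := by
  have h := congrArg (dot8 · (nstar vs Bs))
    (sub_smul_hllMid (pfun := pfun) (hd := hd) (ξ := ξ) (Um := Um) (Up := Up) h)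
  simp only [dot8_eq_dotProduct, add_dotProduct, sub_dotProduct, smul_dotProduct,
    smul_eq_mul] at h
  simp only [gql, dot8_eq_dotProduct]
  linear_combination h

lemma dens_hllMid_nonneg (hm : 0 < dens Um) (hp : 0 < dens Up) (hgap : σm < σp)
    (hσp : alphaR pfun hd ξ Up Um ≤ σp) (hσm : σm ≤ alphaL pfun hd ξ Um Up) :
    0 ≤ dens (hllMid pfun hd ξ Um Up σm σp) := by
  have h : (σp - σm) * dens (hllMid pfun hd ξ Um Up σm σp) = σp * dens Up
      - dens (dirFlux pfun hd ξ Up) - σm * dens Um + dens (dirFlux pfun hd ξ Um) :=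
    congrArg dens (sub_smul_hllMid (sub_pos.2 hgap).ne')
  rw [dens_dirFlux, dens_dirFlux] at h
  have hvp := (le_sub_of_alphaR_le hσp).1
  have hvm := (add_le_of_le_alphaL hσm).1
  have := waveC_nonneg (pfun := pfun) (hd := hd) (ξ := ξ) Up
  have := waveC_nonneg (pfun := pfun) (hd := hd) (ξ := ξ) Um
  have := magJump_nonneg Up Um
  refine nonneg_of_mul_nonneg_right ?_ (sub_pos.2 hgap)
  rw [h]
  nlinarith

lemma sqrt_add_sqrt_mul_dirDot_roeV (hp : 0 < dens Up) (hm : 0 < dens Um) (w : Fin 3 → ℝ) :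
    (√(dens Up) + √(dens Um)) * (dirDot hd ξ (roeV Up Um) - dirDot hd ξ w)
      = √(dens Up) * dirDot hd ξ (vel Up - w) + √(dens Um) * dirDot hd ξ (vel Um - w) := by
  have := Real.sqrt_pos.2 hp
  have := Real.sqrt_pos.2 hm
  simp only [dirDot_eq_dot3, dot3_expand, roeV, Pi.sub_apply]
  field_simp
  ring

lemma abs_roeV_mul_sq3_sub_le (hξ : unitVec ξ) (hp : 0 < dens Up) (hm : 0 < dens Um)
    (vs Bs : Fin 3 → ℝ) :
    |(dirDot hd ξ (roeV Up Um) - dirDot hd ξ vs) * (sq3 (magB Up - Bs) - sq3 (magB Um - Bs))|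
      ≤ magJump Up Um * (dens Up * sq3 (vel Up - vs) + sq3 (magB Up - Bs)
          + dens Um * sq3 (vel Um - vs) + sq3 (magB Um - Bs)) := by
  set sp := √(dens Up)
  set sm := √(dens Um)
  have hsp : 0 < sp := Real.sqrt_pos.2 hp
  have hsm : 0 < sm := Real.sqrt_pos.2 hm
  have hvel : (sp + sm) * |dirDot hd ξ (roeV Up Um) - dirDot hd ξ vs|
      ≤ sp * norm3 (vel Up - vs) + sm * norm3 (vel Um - vs) := by
    rw [← abs_of_pos (add_pos hsp hsm), ← abs_mul, sqrt_add_sqrt_mul_dirDot_roeV hp hm]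
    refine (abs_add_le _ _).trans ?_
    rw [abs_mul, abs_mul, abs_of_pos hsp, abs_of_pos hsm]
    gcongr <;> exact abs_dirDot_le hd hξ _
  have hmag : |sq3 (magB Up - Bs) - sq3 (magB Um - Bs)|
      ≤ norm3 (magB Up - magB Um) * (norm3 (magB Up - Bs) + norm3 (magB Um - Bs)) := by
    simpa only [sub_sub_sub_cancel_right] using abs_sq3_sub_sq3_le (magB Up - Bs) (magB Um - Bs)
  have hamgm := add_mul_add_le (sp * norm3 (vel Up - vs)) (sm * norm3 (vel Um - vs))
    (norm3 (magB Up - Bs)) (norm3 (magB Um - Bs))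
  simp only [mul_pow, norm3_sq, Real.sq_sqrt hp.le, Real.sq_sqrt hm.le, sp, sm] at hamgm
  have := mul_nonneg hsp.le (norm3_nonneg (vel Up - vs))
  have := mul_nonneg hsm.le (norm3_nonneg (vel Um - vs))
  rw [abs_mul, magJump, div_mul_eq_mul_div, le_div_iff₀ (add_pos hsp hsm)]
  calc _ = (sp + sm) * |dirDot hd ξ (roeV Up Um) - dirDot hd ξ vs|
        * |sq3 (magB Up - Bs) - sq3 (magB Um - Bs)| := by ring
    _ ≤ (sp * norm3 (vel Up - vs) + sm * norm3 (vel Um - vs))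
        * (norm3 (magB Up - magB Um) * (norm3 (magB Up - Bs) + norm3 (magB Um - Bs))) := by
      gcongr
    _ = norm3 (magB Up - magB Um) * ((sp * norm3 (vel Up - vs) + sm * norm3 (vel Um - vs))
        * (norm3 (magB Up - Bs) + norm3 (magB Um - Bs))) := by ring
    _ ≤ _ := by
      gcongr
      · exact norm3_nonneg _
      · linarith

theorem dot3_mul_sub_le_gql_hllMid (hEOS : IsEOS pfun) (hξ : unitVec ξ) (hm : Um ∈ Gset)
    (hp : Up ∈ Gset) (hσp : alphaR pfun hd ξ Up Um ≤ σp) (hσm : σm ≤ alphaL pfun hd ξ Um Up)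
    (vs Bs : Fin 3 → ℝ) :
    dot3 vs Bs * (dirDot hd ξ (magB Um) - dirDot hd ξ (magB Up))
      ≤ (σp - σm) * gql vs Bs (hllMid pfun hd ξ Um Up σm σp) := by
  have hgap : σm < σp := (hσm.trans_lt (alphaL_lt_alphaR hEOS hm hp)).trans_le hσp
  rw [sub_mul_gql_hllMid (sub_pos.2 hgap).ne', dot8_dirFlux_nstar hd ξ hp.1.ne',
    dot8_dirFlux_nstar hd ξ hm.1.ne']
  obtain ⟨hvp, hroep⟩ := le_sub_of_alphaR_le hσp
  obtain ⟨hvm, hroem⟩ := add_le_of_le_alphaL hσm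
  have hRp := abs_le.mp (abs_remainder_le (hd := hd) hEOS hξ hp (vel Up - vs) (magB Up - Bs))
  have hRm := abs_le.mp (abs_remainder_le (hd := hd) hEOS hξ hm (vel Um - vs) (magB Um - Bs))
  have hroe := abs_le.mp (abs_roeV_mul_sq3_sub_le (hd := hd) hξ hp.1 hm.1 vs Bs)
  have hQp := gql_eq hp.1.ne' vs Bs
  have hQm := gql_eq hm.1.ne' vs Bs
  rw [← hQp] at hRp
  rw [← hQm] at hRm
  simp only [dirDot_sub] at hRp hRm ⊢
  have := mul_nonneg hp.1.le (sq3_nonneg (vel Up - vs))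
  have := mul_nonneg hm.1.le (sq3_nonneg (vel Um - vs))
  have hXp := sq3_nonneg (magB Up - Bs)
  have hXm := sq3_nonneg (magB Um - Bs)
  have := hp.2
  have := hm.2
  -- After the `v*·B*` terms cancel, the goal is the sum of `h₁`–`h₅`, `hRp`, `hRm` and `hroe`.
  have h₁ := mul_nonneg (sub_nonneg.2 hvp) (by linarith : 0 ≤ 2 * gql vs Bs Up - sq3 (magB Up - Bs))
  have h₂ := mul_nonneg (sub_nonneg.2 hroep) hXp
  have h₃ := mul_nonneg (sub_nonneg.2 hvm) (by linarith : 0 ≤ 2 * gql vs Bs Um - sq3 (magB Um - Bs))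
  have h₄ := mul_nonneg (sub_nonneg.2 hroem) hXm
  have h₅ := mul_le_mul_of_nonneg_left (by linarith : dens Up * sq3 (vel Up - vs)
      + sq3 (magB Up - Bs) + dens Um * sq3 (vel Um - vs) + sq3 (magB Um - Bs)
      ≤ 2 * gql vs Bs Up + 2 * gql vs Bs Um) (magJump_nonneg Up Um)
  linarith [hRp.1, hRm.2, hroe.1]

end HLL

section Update

variable {pfun : ℝ → ℝ → ℝ} {d : ℕ} {hd : d ≤ 3} {N : ℕ} {ξ : Fin N → Fin d → ℝ}

lemma dens_add_sum_smul (U : MHDState) (t : Fin N → ℝ) (H : Fin N → MHDState) :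
    dens (U + ∑ j, t j • (H j - U)) = dens U + ∑ j, t j * (dens (H j) - dens U) := by
  simp [dens, Finset.sum_apply]

lemma gql_add_sum_smul (vs Bs : Fin 3 → ℝ) (U : MHDState) (t : Fin N → ℝ)
    (H : Fin N → MHDState) :
    gql vs Bs (U + ∑ j, t j • (H j - U))
      = gql vs Bs U + ∑ j, t j * (gql vs Bs (H j) - gql vs Bs U) := by
  simp only [gql, dot8_eq_dotProduct, add_dotProduct, sum_dotProduct, smul_dotProduct,
    sub_dotProduct, smul_eq_mul, add_sub_add_right_eq_sub]
  ring

theorem add_sum_smul_hllMid_mem_Gset (hEOS : IsEOS pfun) (hξ : ∀ j, unitVec (ξ j))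
    {U : MHDState} (hU : U ∈ Gset) {Un : Fin N → MHDState} (hUn : ∀ j, Un j ∈ Gset)
    {σm σp : Fin N → ℝ} (hσp : ∀ j, alphaR pfun hd (ξ j) (Un j) U ≤ σp j)
    (hσm : ∀ j, σm j ≤ alphaL pfun hd (ξ j) U (Un j)) {t : Fin N → ℝ} (ht : ∀ j, 0 ≤ t j)
    (ht1 : ∑ j, t j < 1)
    (hjump : ∑ j, t j * ((dirDot hd (ξ j) (magB U) - dirDot hd (ξ j) (magB (Un j)))
      / (σp j - σm j)) = 0) :
    U + ∑ j, t j • (hllMid pfun hd (ξ j) U (Un j) (σm j) (σp j) - U) ∈ Gset := by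
  have hgap : ∀ j, σm j < σp j :=
    fun j => ((hσm j).trans_lt (alphaL_lt_alphaR hEOS hU (hUn j))).trans_le (hσp j)
  set U' := U + ∑ j, t j • (hllMid pfun hd (ξ j) U (Un j) (σm j) (σp j) - U)
  have hdens : 0 < dens U' := by
    rw [dens_add_sum_smul]
    exact add_sum_mul_sub_pos ht ht1 hU.1 (b := 0)
      (fun j => dens_hllMid_nonneg hU.1 (hUn j).1 (hgap j) (hσp j) (hσm j)) (by simp)
  refine ⟨hdens, ?_⟩
  rw [← gql_vel_magB hdens.ne', gql_add_sum_smul]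
  refine add_sum_mul_sub_pos ht ht1 (gql_pos hU _ _) (fun j => ?_)
    (b := fun j => dot3 (vel U') (magB U')
      * ((dirDot hd (ξ j) (magB U) - dirDot hd (ξ j) (magB (Un j))) / (σp j - σm j))) ?_
  · rw [← mul_div_assoc, div_le_iff₀' (sub_pos.2 (hgap j))]
    exact dot3_mul_sub_le_gql_hllMid hEOS (hξ j) hU (hUn j) (hσp j) (hσm j) _ _
  · simp only [mul_left_comm (t _), ← Finset.mul_sum, hjump, mul_zero]

end Update

section Scheme

variable {pfun : ℝ → ℝ → ℝ} {d : ℕ} {hd : d ≤ 3} {N : ℕ} {ℓ : Fin N → ℝ} {ξ : Fin N → Fin d → ℝ}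

lemma sum_mul_dirDot_eq_zero (hGreen : ∑ j, ℓ j • ξ j = 0) (w : Fin 3 → ℝ) :
    ∑ j, ℓ j * dirDot hd (ξ j) w = 0 := by
  simp only [dirDot, Finset.mul_sum, ← mul_assoc]
  rw [Finset.sum_comm]
  refine Finset.sum_eq_zero fun k _ => ?_
  rw [← Finset.sum_mul]
  simpa using congrArg (· k * w (Fin.castLE hd k)) hGreen

lemma sum_smul_dirFlux_eq_zero (hGreen : ∑ j, ℓ j • ξ j = 0) (U : MHDState) :
    ∑ j, ℓ j • dirFlux pfun hd (ξ j) U = 0 := by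
  simp only [dirFlux, Finset.smul_sum, smul_smul]
  rw [Finset.sum_comm]
  refine Finset.sum_eq_zero fun i _ => ?_
  rw [← Finset.sum_smul]
  simpa using congrArg (· i • flux pfun (Fin.castLE hd i) U) hGreen

lemma hllFlux_eq (ξ : Fin d → ℝ) (Um Up : MHDState) {σm σp : ℝ} (h : σp - σm ≠ 0) :
    hllFlux pfun hd ξ Um Up σm σp
      = dirFlux pfun hd ξ Um + σm • (hllMid pfun hd ξ Um Up σm σp - Um) := by
  funext i
  simp only [hllFlux, hllMid, Pi.smul_apply, Pi.add_apply, Pi.sub_apply, smul_eq_mul]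
  field_simp
  ring

lemma sub_smul_sum_hllFlux (hGreen : ∑ j, ℓ j • ξ j = 0) (U : MHDState) (Un : Fin N → MHDState)
    {σm σp : Fin N → ℝ} (hgap : ∀ j, σm j < σp j) (c : ℝ) :
    U - c • ∑ j, ℓ j • hllFlux pfun hd (ξ j) U (Un j) (σm j) (σp j)
      = U + ∑ j, (c * (ℓ j * -σm j)) • (hllMid pfun hd (ξ j) U (Un j) (σm j) (σp j) - U) := by
  simp only [hllFlux_eq _ _ _ (sub_pos.2 (hgap _)).ne', smul_add, Finset.sum_add_distrib,
    sum_smul_dirFlux_eq_zero hGreen, zero_add, Finset.smul_sum, smul_smul]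
  rw [sub_eq_add_neg, ← Finset.sum_neg_distrib]
  congr 1
  refine Finset.sum_congr rfl fun j _ => ?_
  rw [← neg_smul]
  ring_nf

lemma sum_mul_jump_eq_zero (hGreen : ∑ j, ℓ j • ξ j = 0) {σm σp : Fin N → ℝ}
    (hgap : ∀ j, σm j < σp j) (B : Fin 3 → ℝ) (Bn : Fin N → Fin 3 → ℝ)
    (hDDF : ∑ j, ℓ j * dirDot hd (ξ j)
      (fun k => (σp j * B k - σm j * Bn j k) / (σp j - σm j)) = 0) :
    ∑ j, ℓ j * (σm j * (dirDot hd (ξ j) B - dirDot hd (ξ j) (Bn j)) / (σp j - σm j)) = 0 := by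
  have hsplit : ∀ j, dirDot hd (ξ j) (fun k => (σp j * B k - σm j * Bn j k) / (σp j - σm j))
      = dirDot hd (ξ j) B
        + σm j * (dirDot hd (ξ j) B - dirDot hd (ξ j) (Bn j)) / (σp j - σm j) := by
    intro j
    have := (sub_pos.2 (hgap j)).ne'
    simp only [dirDot, Finset.mul_sum, Finset.sum_div, ← Finset.sum_sub_distrib (G := ℝ),
      ← Finset.sum_add_distrib (M := ℝ)]
    refine Finset.sum_congr rfl fun k _ => ?_
    field_simp
    ring
  simpa only [hsplit, mul_add, Finset.sum_add_distrib, sum_mul_dirDot_eq_zero hGreen, zero_add]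
    using hDDF

end Scheme

theorem twoD_first_order_conservative_PP_general (pfun : ℝ → ℝ → ℝ) (hEOS : IsEOS pfun)
    {N : ℕ}
    (areaK : ℝ) (hK : 0 < areaK)
    (len : Fin N → ℝ) (hlen : ∀ j, 0 < len j)
    (ξ : Fin N → Fin 2 → ℝ) (hξ : ∀ j, unitVec (ξ j))
    (hGreen : (∑ j, len j • ξ j) = 0)
    (UK : MHDState) (hUK : UK ∈ Gset)
    (Un : Fin N → MHDState) (hUn : ∀ j, Un j ∈ Gset)
    (σr σl : Fin N → ℝ)
    (hr : ∀ j, alphaR pfun d2le3 (ξ j) (Un j) UK ≤ σr j)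
    (hl : ∀ j, σl j ≤ alphaL pfun d2le3 (ξ j) UK (Un j))
    (Δt : ℝ) (hΔt : 0 < Δt)
    (hDDF : areaK⁻¹ *
      (∑ j, len j * dirDot d2le3 (ξ j)
        (fun k => (max (σr j) 0 * magB UK k - min (σl j) 0 * magB (Un j) k)
          / (max (σr j) 0 - min (σl j) 0))) = 0)
    (hCFL : Δt / areaK * (∑ j, len j * (-min (σl j) 0)) < 1) :
    UK - (Δt / areaK) •
      (∑ j, len j • hllFlux pfun d2le3 (ξ j) UK (Un j) (min (σl j) 0) (max (σr j) 0))
      ∈ Gset := by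
  have hσp : ∀ j, alphaR pfun d2le3 (ξ j) (Un j) UK ≤ max (σr j) 0 :=
    fun j => (hr j).trans (le_max_left _ _)
  have hσm : ∀ j, min (σl j) 0 ≤ alphaL pfun d2le3 (ξ j) UK (Un j) :=
    fun j => (min_le_left _ _).trans (hl j)
  have hgap : ∀ j, min (σl j) 0 < max (σr j) 0 :=
    fun j => ((hσm j).trans_lt (alphaL_lt_alphaR hEOS hUK (hUn j))).trans_le (hσp j)
  have hjump := sum_mul_jump_eq_zero hGreen hgap (magB UK) (fun j => magB (Un j))
    ((mul_eq_zero.mp hDDF).resolve_left (inv_ne_zero hK.ne'))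
  rw [sub_smul_sum_hllFlux hGreen UK Un hgap]
  refine add_sum_smul_hllMid_mem_Gset hEOS hξ hUK hUn hσp hσm (fun j => ?_)
    (by rwa [← Finset.mul_sum]) ?_
  · exact mul_nonneg (div_pos hΔt hK).le (mul_nonneg (hlen j).le (neg_nonneg.2 (min_le_right _ _)))
  · calc _ = -(Δt / areaK) * ∑ j, len j * (min (σl j) 0
            * (dirDot d2le3 (ξ j) (magB UK) - dirDot d2le3 (ξ j) (magB (Un j)))
            / (max (σr j) 0 - min (σl j) 0)) := by
          rw [Finset.mul_sum]
          refine Finset.sum_congr rfl fun j _ => ?_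
          ring
      _ = 0 := by rw [hjump, mul_zero]

/-- Corollary 4.2: positivity preservation of the first-order conservative
2D scheme under the discrete divergence-free condition (one cell, one step). -/
theorem twoD_first_order_conservative_PP (pfun : ℝ → ℝ → ℝ) (hEOS : IsEOS pfun)
    {N : ℕ} (hN : 1 ≤ N)
    (areaK : ℝ) (hK : 0 < areaK)
    (len : Fin N → ℝ) (hlen : ∀ j, 0 < len j)
    (ξ : Fin N → Fin 2 → ℝ) (hξ : ∀ j, unitVec (ξ j))
    (hGreen : (∑ j, len j • ξ j) = 0)
    (UK : MHDState) (hUK : UK ∈ Gset)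
    (Un : Fin N → MHDState) (hUn : ∀ j, Un j ∈ Gset)
    (σr σl : Fin N → ℝ)
    (hr : ∀ j, alphaR pfun d2le3 (ξ j) (Un j) UK ≤ σr j)
    (hl : ∀ j, σl j ≤ alphaL pfun d2le3 (ξ j) UK (Un j))
    (Δt : ℝ) (hΔt : 0 < Δt)
    (hDDF : areaK⁻¹ *
      (∑ j, len j * dirDot d2le3 (ξ j)
        (fun k => (max (σr j) 0 * magB UK k - min (σl j) 0 * magB (Un j) k)
          / (max (σr j) 0 - min (σl j) 0))) = 0)
    (hCFL : Δt / areaK * (∑ j, len j * (-min (σl j) 0)) < 1) :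
    UK - (Δt / areaK) •
      (∑ j, len j • hllFlux pfun d2le3 (ξ j) UK (Un j) (min (σl j) 0) (max (σr j) 0))
      ∈ Gset :=
  twoD_first_order_conservative_PP_general pfun hEOS areaK hK len hlen ξ hξ hGreen UK hUK Un hUn σr
    σl hr hl Δt hΔt hDDF hCFL

end MHD
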